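/- Let S = μ + Θγ + √Θ σ Z be a univariate NMVM random variable (Z standard normal independent of Θ > 0 with density π), and suppose c* = E[Θ] < ∞ so that π*(θ) = θπ(θ)/c* is a density. Let S* be the NMVM random variable with the same parameters but mixing density π*, and set α* = 1 − F̄_{S*}(s_α). Then for k ∈ ℕ: E[S^k | S > s_α] = μ E[S^{k−1} | S > s_α] + c*(1−α*)/(1−α) · [σ² s_α^{k−1} h_{S*}(s_α) + γ E[(S*)^{k−1} | S* > s_α] + (k−1)σ² E[(S*)^{k−2} | S* > s_α]], where h_{S*} = f_{S*}/F̄_{S*} is the hazard function. -/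

import Mathlib

open MeasureTheory Set

/-- Density of the normal distribution with mean `m` and variance `v`. -/
noncomputable def ndens (m v x : ℝ) : ℝ :=
  (Real.sqrt (2 * Real.pi * v))⁻¹ * Real.exp (-(x - m) ^ 2 / (2 * v))

/-- Density of the univariate NMVM distribution with parameters `μ, γ, σ` and
mixing density `q` on `(0, ∞)`. -/
noncomputable def mixdens (μ γ σ : ℝ) (q : ℝ → ℝ) (s : ℝ) : ℝ :=
  ∫ θ in Set.Ioi (0:ℝ), ndens (μ + θ * γ) (θ * σ ^ 2) s * q θ

/-- Survival function of the univariate NMVM distribution. -/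
noncomputable def surv (μ γ σ : ℝ) (q : ℝ → ℝ) (c : ℝ) : ℝ :=
  ∫ s in Set.Ioi c, mixdens μ γ σ q s

/-- `k`-th tail moment `E[S^k | S > c]` of the univariate NMVM distribution. -/
noncomputable def tailmom (μ γ σ : ℝ) (q : ℝ → ℝ) (k : ℕ) (c : ℝ) : ℝ :=
  (surv μ γ σ q c)⁻¹ * ∫ s in Set.Ioi c, s ^ k * mixdens μ γ σ q s

/-!
Given `Θ = θ`, `S` is Gaussian with mean `m = μ + θγ` and variance `v = θσ²`, and integrating
`(x^k φ)' = k x^(k-1) φ + ((m - x) / v) x^k φ` over `(a, ∞)` gives the Gaussian tail recursion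
`∫_a^∞ x^(k+1) φ = m ∫_a^∞ x^k φ + v (a^k φ(a) + k ∫_a^∞ x^(k-1) φ)`.
Integrating against `π(θ) dθ` and exchanging the integrals, every term carrying a factor `θ`
(from `γθ` in the mean and `σ²θ` in the variance) becomes an integral against
`θ π(θ) = c* π*(θ)`, i.e. a tail moment of `S*`. Dividing by `P(S > s_α) = 1 - α` gives the
recursion.
-/

open ProbabilityTheory

lemma ndens_nonneg (m v x : ℝ) : 0 ≤ ndens m v x := by
  unfold ndens; positivity

lemma ndens_eq_gaussianPDFReal (m : ℝ) {v : ℝ} (hv : 0 ≤ v) :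
    ndens m v = gaussianPDFReal m v.toNNReal := by
  ext x
  rw [gaussianPDFReal, ndens, Real.coe_toNNReal v hv]

lemma integral_ndens (m : ℝ) {v : ℝ} (hv : 0 < v) : ∫ x, ndens m v x = 1 := by
  rw [ndens_eq_gaussianPDFReal m hv.le]
  exact integral_gaussianPDFReal_eq_one m (by simpa using hv)

lemma integrable_pow_mul_ndens (m : ℝ) {v : ℝ} (hv : 0 < v) (j : ℕ) :
    Integrable (fun x => x ^ j * ndens m v x) := by
  have hv' : v.toNNReal ≠ 0 := by simpa using hv
  have hpow : Integrable (fun x : ℝ => x ^ j) (gaussianReal m v.toNNReal) :=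
    (memLp_id_gaussianReal j).integrable_norm_pow'.mono' (by fun_prop)
      (ae_of_all _ fun x => by simp)
  rw [gaussianReal_of_var_ne_zero _ hv', integrable_withDensity_iff_integrable_smul'
    (measurable_gaussianPDF _ _) (ae_of_all _ fun _ => gaussianPDF_lt_top)] at hpow
  simpa [ndens_eq_gaussianPDFReal m hv.le, toReal_gaussianPDF, mul_comm] using hpow

lemma hasDerivAt_ndens (m : ℝ) {v : ℝ} (hv : 0 < v) (x : ℝ) :
    HasDerivAt (ndens m v) ((m - x) / v * ndens m v x) x := by
  have hexp : HasDerivAt (fun x => -(x - m) ^ 2 / (2 * v)) ((m - x) / v) x :=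
    ((((hasDerivAt_id' x).sub_const m).fun_pow 2).fun_neg.div_const (2 * v)).congr_deriv (by
      field_simp; ring)
  exact (hexp.exp.const_mul _).congr_deriv (by unfold ndens; ring)

theorem setIntegral_Ioi_pow_succ_mul_ndens (m a : ℝ) {v : ℝ} (hv : 0 < v) (k : ℕ) :
    ∫ x in Ioi a, x ^ (k + 1) * ndens m v x
      = m * (∫ x in Ioi a, x ^ k * ndens m v x)
        + v * (a ^ k * ndens m v a + k * ∫ x in Ioi a, x ^ (k - 1) * ndens m v x) := by
  set I : ℕ → ℝ → ℝ := fun j x => x ^ j * ndens m v x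
  have hI : ∀ j, Integrable (I j) := integrable_pow_mul_ndens m hv
  have hderiv : ∀ x, HasDerivAt (I k) (k * I (k - 1) x + m / v * I k x - v⁻¹ * I (k + 1) x) x :=
    fun x => ((hasDerivAt_pow k x).mul (hasDerivAt_ndens m hv x)).congr_deriv (by
      simp only [I]; field_simp; ring)
  have hint : Integrable fun x => k * I (k - 1) x + m / v * I k x - v⁻¹ * I (k + 1) x :=
    (((hI _).const_mul _).add ((hI _).const_mul _)).sub ((hI _).const_mul _)
  have hibp := integral_Ioi_of_hasDerivAt_of_tendsto' (a := a) (fun x _ => hderiv x)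
    hint.integrableOn (tendsto_zero_of_hasDerivAt_of_integrableOn_Ioi (a := a) (fun x _ => hderiv x)
      hint.integrableOn (hI k).integrableOn)
  rw [integral_sub, integral_add, integral_const_mul, integral_const_mul,
    integral_const_mul] at hibp
  · simp only [I] at hibp
    field_simp at hibp
    linear_combination -hibp
  all_goals first
    | exact ((hI _).const_mul _).integrableOn
    | exact (((hI _).const_mul _).add ((hI _).const_mul _)).integrableOn

section Mixture

variable {μ γ σ : ℝ} {q : ℝ → ℝ}

lemma measurable_ndens_mixture : Measurable fun z : ℝ × ℝ =>
    ndens (μ + z.2 * γ) (z.2 * σ ^ 2) z.1 := by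
  unfold ndens
  fun_prop

lemma integrable_prod_ndens_mul (hσ : σ ≠ 0) (hq : IntegrableOn q (Ioi 0)) :
    Integrable (fun z : ℝ × ℝ => ndens (μ + z.2 * γ) (z.2 * σ ^ 2) z.1 * q z.2)
      (volume.prod (volume.restrict (Ioi 0))) := by
  have hv : ∀ θ ∈ Ioi (0 : ℝ), 0 < θ * σ ^ 2 := fun θ hθ => mul_pos hθ (by positivity)
  refine (integrable_prod_iff' ?_).2 ⟨?_, ?_⟩
  · exact measurable_ndens_mixture.aestronglyMeasurable.mul hq.1.comp_snd
  · filter_upwards [ae_restrict_mem measurableSet_Ioi] with θ hθ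
    rw [ndens_eq_gaussianPDFReal _ (hv θ hθ).le]
    exact (integrable_gaussianPDFReal _ _).mul_const _
  · refine hq.norm.congr ?_
    filter_upwards [ae_restrict_mem measurableSet_Ioi] with θ hθ
    simp_rw [norm_mul, Real.norm_of_nonneg (ndens_nonneg _ _ _)]
    rw [integral_mul_const, integral_ndens _ (hv θ hθ), one_mul]

lemma integrable_prod_pow_mul_ndens_mul (hσ : σ ≠ 0) (hq : IntegrableOn q (Ioi 0))
    (hq0 : ∀ θ ∈ Ioi 0, 0 ≤ q θ) {a : ℝ} {j : ℕ}
    (hj : IntegrableOn (fun s => s ^ j * mixdens μ γ σ q s) (Ioi a)) :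
    Integrable (fun z : ℝ × ℝ => z.1 ^ j * (ndens (μ + z.2 * γ) (z.2 * σ ^ 2) z.1 * q z.2))
      ((volume.restrict (Ioi a)).prod (volume.restrict (Ioi 0))) := by
  refine (integrable_prod_iff ?_).2 ⟨?_, ?_⟩
  · exact (measurable_fst.pow_const j).aestronglyMeasurable.mul
      (measurable_ndens_mixture.aestronglyMeasurable.mul hq.1.comp_snd)
  · filter_upwards [ae_restrict_of_ae (integrable_prod_ndens_mul hσ hq).prod_right_ae] with s hs
    exact hs.const_mul _
  · refine hj.norm.congr (ae_of_all _ fun s => ?_)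
    have hmix : ∫ θ in Ioi 0, ‖ndens (μ + θ * γ) (θ * σ ^ 2) s * q θ‖ = mixdens μ γ σ q s :=
      setIntegral_congr_fun measurableSet_Ioi fun θ hθ =>
        Real.norm_of_nonneg (mul_nonneg (ndens_nonneg _ _ _) (hq0 θ hθ))
    have hmix_nonneg : 0 ≤ mixdens μ γ σ q s := hmix ▸ integral_nonneg fun _ => norm_nonneg _
    simp_rw [norm_mul (s ^ j), integral_const_mul, hmix, Real.norm_of_nonneg hmix_nonneg]

lemma setIntegral_pow_mul_ndens_mul (a : ℝ) (j : ℕ) (θ : ℝ) :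
    ∫ s in Ioi a, s ^ j * (ndens (μ + θ * γ) (θ * σ ^ 2) s * q θ)
      = q θ * ∫ s in Ioi a, s ^ j * ndens (μ + θ * γ) (θ * σ ^ 2) s := by
  simp_rw [← mul_assoc, integral_mul_const]
  ring

lemma setIntegral_pow_mul_mixdens (hσ : σ ≠ 0) (hq : IntegrableOn q (Ioi 0))
    (hq0 : ∀ θ ∈ Ioi 0, 0 ≤ q θ) {a : ℝ} {j : ℕ}
    (hj : IntegrableOn (fun s => s ^ j * mixdens μ γ σ q s) (Ioi a)) :
    ∫ s in Ioi a, s ^ j * mixdens μ γ σ q s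
      = ∫ θ in Ioi 0, q θ * ∫ s in Ioi a, s ^ j * ndens (μ + θ * γ) (θ * σ ^ 2) s := by
  calc ∫ s in Ioi a, s ^ j * mixdens μ γ σ q s
      = ∫ s in Ioi a, ∫ θ in Ioi 0, s ^ j * (ndens (μ + θ * γ) (θ * σ ^ 2) s * q θ) := by
        simp_rw [integral_const_mul, mixdens]
    _ = ∫ θ in Ioi 0, ∫ s in Ioi a, s ^ j * (ndens (μ + θ * γ) (θ * σ ^ 2) s * q θ) :=
        integral_integral_swap (integrable_prod_pow_mul_ndens_mul hσ hq hq0 hj)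
    _ = _ := by simp_rw [setIntegral_pow_mul_ndens_mul]

lemma integrableOn_mul_setIntegral_pow_mul_ndens (hσ : σ ≠ 0) (hq : IntegrableOn q (Ioi 0))
    (hq0 : ∀ θ ∈ Ioi 0, 0 ≤ q θ) {a : ℝ} {j : ℕ}
    (hj : IntegrableOn (fun s => s ^ j * mixdens μ γ σ q s) (Ioi a)) :
    IntegrableOn (fun θ => q θ * ∫ s in Ioi a, s ^ j * ndens (μ + θ * γ) (θ * σ ^ 2) s)
      (Ioi 0) :=
  (integrable_prod_pow_mul_ndens_mul hσ hq hq0 hj).integral_prod_right.congr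
    (ae_of_all _ (setIntegral_pow_mul_ndens_mul a j))

theorem setIntegral_pow_succ_mul_mixdens (hσ : σ ≠ 0) (hq : IntegrableOn q (Ioi 0))
    (hθq : IntegrableOn (fun θ => θ * q θ) (Ioi 0)) (hq0 : ∀ θ ∈ Ioi 0, 0 ≤ q θ) {a : ℝ} {k : ℕ}
    (h₁ : IntegrableOn (fun s => s ^ (k + 1) * mixdens μ γ σ q s) (Ioi a))
    (h₂ : IntegrableOn (fun s => s ^ k * mixdens μ γ σ q s) (Ioi a))
    (h₃ : IntegrableOn (fun s => s ^ k * mixdens μ γ σ (fun θ => θ * q θ) s) (Ioi a))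
    (h₄ : IntegrableOn (fun s => s ^ (k - 1) * mixdens μ γ σ (fun θ => θ * q θ) s) (Ioi a)) :
    ∫ s in Ioi a, s ^ (k + 1) * mixdens μ γ σ q s
      = μ * (∫ s in Ioi a, s ^ k * mixdens μ γ σ q s)
        + σ ^ 2 * a ^ k * mixdens μ γ σ (fun θ => θ * q θ) a
        + γ * (∫ s in Ioi a, s ^ k * mixdens μ γ σ (fun θ => θ * q θ) s)
        + k * σ ^ 2 * ∫ s in Ioi a, s ^ (k - 1) * mixdens μ γ σ (fun θ => θ * q θ) s := by
  have hθq0 : ∀ θ ∈ Ioi (0 : ℝ), 0 ≤ θ * q θ := fun θ hθ => mul_nonneg (le_of_lt hθ) (hq0 θ hθ)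
  rw [setIntegral_pow_mul_mixdens hσ hq hq0 h₁, setIntegral_pow_mul_mixdens hσ hq hq0 h₂,
    setIntegral_pow_mul_mixdens hσ hθq hθq0 h₃, setIntegral_pow_mul_mixdens hσ hθq hθq0 h₄]
  set M : ℕ → ℝ → ℝ := fun j θ => ∫ s in Ioi a, s ^ j * ndens (μ + θ * γ) (θ * σ ^ 2) s
  set F : ℝ → ℝ := fun θ =>
    μ * (q θ * M k θ) + γ * (θ * q θ * M k θ) + k * σ ^ 2 * (θ * q θ * M (k - 1) θ)
  have hI₂ : IntegrableOn (fun θ => μ * (q θ * M k θ)) (Ioi 0) :=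
    (integrableOn_mul_setIntegral_pow_mul_ndens hσ hq hq0 h₂).const_mul μ
  have hI₃ : IntegrableOn (fun θ => γ * (θ * q θ * M k θ)) (Ioi 0) :=
    (integrableOn_mul_setIntegral_pow_mul_ndens hσ hθq hθq0 h₃).const_mul γ
  have hI₄ : IntegrableOn (fun θ => k * σ ^ 2 * (θ * q θ * M (k - 1) θ)) (Ioi 0) :=
    (integrableOn_mul_setIntegral_pow_mul_ndens hσ hθq hθq0 h₄).const_mul _
  have hF : IntegrableOn F (Ioi 0) := (hI₂.add hI₃).add hI₄
  -- the boundary term needs no bound of its own: it is integrable as a difference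
  have hboundary : ∀ θ ∈ Ioi (0 : ℝ), q θ * M (k + 1) θ - F θ
      = σ ^ 2 * a ^ k * (ndens (μ + θ * γ) (θ * σ ^ 2) a * (θ * q θ)) := fun θ hθ => by
    simp only [M, F]
    rw [setIntegral_Ioi_pow_succ_mul_ndens _ _ (mul_pos hθ (by positivity))]
    ring
  have hsplit : ∫ θ in Ioi 0, q θ * M (k + 1) θ
      = (∫ θ in Ioi 0, F θ) + ∫ θ in Ioi 0, (q θ * M (k + 1) θ - F θ) := by
    rw [integral_sub (integrableOn_mul_setIntegral_pow_mul_ndens hσ hq hq0 h₁) hF]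
    ring
  rw [hsplit, setIntegral_congr_fun measurableSet_Ioi hboundary, integral_const_mul]
  simp only [F]
  rw [integral_add, integral_add, integral_const_mul, integral_const_mul, integral_const_mul]
  · unfold mixdens
    ring
  exacts [hI₂, hI₃, hI₂.add hI₃, hI₄]

end Mixture

theorem nmvm_tail_moment_recursion_general
    (μ γ σ α sα : ℝ) (hσ : 0 < σ) (p : ℝ → ℝ)
    (hp0 : ∀ θ, 0 ≤ p θ) (hp1 : ∫ θ in Set.Ioi (0:ℝ), p θ = 1)
    (k : ℕ) (hk : 1 ≤ k)
    (cstar : ℝ) (hcstar : cstar = ∫ θ in Set.Ioi (0:ℝ), θ * p θ) (hcpos : 0 < cstar)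
    (pstar : ℝ → ℝ) (hpstar : pstar = fun θ => θ * p θ / cstar)
    (hquant : surv μ γ σ p sα = 1 - α)
    (αstar : ℝ) (hαstar : αstar = 1 - surv μ γ σ pstar sα)
    (hspos : 0 < surv μ γ σ pstar sα)
    (hintp : ∀ j ≤ k, IntegrableOn (fun s => s ^ j * mixdens μ γ σ p s) (Set.Ioi sα))
    (hintps : ∀ j ≤ k, IntegrableOn (fun s => s ^ j * mixdens μ γ σ pstar s) (Set.Ioi sα)) :
    tailmom μ γ σ p k sα
      = μ * tailmom μ γ σ p (k - 1) sα
        + cstar * (1 - αstar) / (1 - α) *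
          (σ ^ 2 * sα ^ (k - 1) * (mixdens μ γ σ pstar sα / surv μ γ σ pstar sα)
            + γ * tailmom μ γ σ pstar (k - 1) sα
            + ((k : ℝ) - 1) * σ ^ 2 * tailmom μ γ σ pstar (k - 2) sα) := by
  obtain ⟨n, rfl⟩ := Nat.exists_eq_add_of_le' hk
  have hp_int : IntegrableOn p (Ioi 0) := .of_integral_ne_zero (by simp [hp1])
  have hθp_int : IntegrableOn (fun θ => θ * p θ) (Ioi 0) :=
    .of_integral_ne_zero (hcstar ▸ hcpos.ne')
  have hmix : ∀ s, mixdens μ γ σ (fun θ => θ * p θ) s = cstar * mixdens μ γ σ pstar s := by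
    intro s
    simp only [mixdens, hpstar, ← integral_const_mul]
    congr 1 with θ
    field_simp
  have hmix_pow : ∀ (j : ℕ) s, s ^ j * mixdens μ γ σ (fun θ => θ * p θ) s
      = cstar * (s ^ j * mixdens μ γ σ pstar s) := fun j s => by
    rw [hmix]
    ring
  have hθp_pow : ∀ j ≤ n + 1, IntegrableOn
      (fun s => s ^ j * mixdens μ γ σ (fun θ => θ * p θ) s) (Ioi sα) := fun j hj => by
    simp_rw [hmix_pow]
    exact (hintps j hj).const_mul cstar
  have key := setIntegral_pow_succ_mul_mixdens hσ.ne' hp_int hθp_int (fun θ _ => hp0 θ)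
    (hintp _ le_rfl) (hintp n (by omega)) (hθp_pow n (by omega)) (hθp_pow (n - 1) (by omega))
  simp only [hmix_pow, integral_const_mul] at key
  rw [hmix] at key
  simp only [tailmom, hquant, hαstar, sub_sub_cancel, key, Nat.add_sub_cancel,
    show n + 1 - 2 = n - 1 by omega]
  have hsurv : surv μ γ σ pstar sα ≠ 0 := hspos.ne'
  field_simp
  push_cast
  ring

/-- recursion for the tail moments of a univariate NMVM random variable. -/
theorem nmvm_tail_moment_recursion
    (μ γ σ α sα : ℝ) (hσ : 0 < σ) (p : ℝ → ℝ)
    (hp0 : ∀ θ, 0 ≤ p θ) (hp1 : ∫ θ in Set.Ioi (0:ℝ), p θ = 1)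
    (k : ℕ) (hk : 1 ≤ k)
    (cstar : ℝ) (hcstar : cstar = ∫ θ in Set.Ioi (0:ℝ), θ * p θ) (hcpos : 0 < cstar)
    (pstar : ℝ → ℝ) (hpstar : pstar = fun θ => θ * p θ / cstar)
    (hα01 : α ∈ Set.Ioo (0:ℝ) 1)
    (hquant : surv μ γ σ p sα = 1 - α)
    (αstar : ℝ) (hαstar : αstar = 1 - surv μ γ σ pstar sα)
    (hspos : 0 < surv μ γ σ pstar sα)
    (hintp : ∀ j ≤ k, IntegrableOn (fun s => s ^ j * mixdens μ γ σ p s) (Set.Ioi sα))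
    (hintps : ∀ j ≤ k, IntegrableOn (fun s => s ^ j * mixdens μ γ σ pstar s) (Set.Ioi sα)) :
    tailmom μ γ σ p k sα
      = μ * tailmom μ γ σ p (k - 1) sα
        + cstar * (1 - αstar) / (1 - α) *
          (σ ^ 2 * sα ^ (k - 1) * (mixdens μ γ σ pstar sα / surv μ γ σ pstar sα)
            + γ * tailmom μ γ σ pstar (k - 1) sα
            + ((k : ℝ) - 1) * σ ^ 2 * tailmom μ γ σ pstar (k - 2) sα) :=
  nmvm_tail_moment_recursion_general μ γ σ α sα hσ p hp0 hp1 k hk cstar hcstar hcpos pstar hpstar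
    hquant αstar hαstar hspos hintp hintps
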